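/- arXiv:1405.4130 — 2 statements merged into one kernel-verified Lean document; each statement's English description precedes it below -/
import Mathlib

section
/- Let (x_m) be uniformly distributed in a compact metrizable space X with probability measure \rho_X, and (y_m) uniformly distributed in a compact metrizable space Y with probability measure \rho_Y. Define the convolution sequence (u_m) in X \times Y by: for the unique k \geq 1 with (k-1)^2 < m \leq k^2, set u_m = (x_k, y_i) if m = (k-1)^2 + 2i - 1 and u_m = (x_i, y_k) if m = (k-1)^2 + 2i. Then (u_m) is uniformly distributed in X \times Y with respect to the product measure \rho_X \times \rho_Y. -/
open MeasureTheory Filter Topology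

/-- Uniform distribution via sampling averages of continuous functions (sequence indexed
from 1, with `u 0` irrelevant). -/
def IsUniformlyDistributed {X : Type*} [TopologicalSpace X] [MeasurableSpace X]
    (μ : Measure X) (w : ℕ → X) : Prop :=
  ∀ f : C(X, ℝ),
    Tendsto (fun N : ℕ => (∑ m ∈ Finset.Icc 1 N, f (w m)) / (N : ℝ)) atTop
      (𝓝 (∫ x, f x ∂μ))

/-! Along the squares `N = K ^ 2` the averages of the convolution sequence are the double
averages `K⁻² ∑_{a, b ≤ K} f (x a, y b)`. The sampling functionals `h ↦ K⁻¹ ∑_{b ≤ K} h (y b)` are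
`1`-Lipschitz on `C(Y, ℝ)`, so their pointwise convergence to `∫ h ∂ρY` is uniform on the compact
family `{f (a, ·)}`; the uniform distribution of `x` and Fubini then give convergence of the double
averages to `∫ f ∂(ρX × ρY)`. Between two consecutive squares only `O(K)` terms are added, which
moves the average by `O(1 / K)`. -/

open Finset

section Sums

variable {M : Type*} [AddCommMonoid M]

lemma sum_Icc_one_add_sum_Ioc (g : ℕ → M) {n N : ℕ} (h : n ≤ N) :
    ∑ m ∈ Icc 1 n, g m + ∑ m ∈ Ioc n N, g m = ∑ m ∈ Icc 1 N, g m := by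
  simpa only [← Icc_add_one_left_eq_Ioc, zero_add] using sum_Ioc_consecutive g (Nat.zero_le n) h

lemma sum_Ioc_eq_sum_odd_add_sum_even (g : ℕ → M) (q K : ℕ) :
    ∑ m ∈ Ioc q (q + (2 * K + 1)), g m
      = ∑ i ∈ Icc 1 (K + 1), g (q + 2 * i - 1) + ∑ i ∈ Icc 1 K, g (q + 2 * i) := by
  induction K with
  | zero => simp
  | succ K ih =>
    rw [show q + (2 * (K + 1) + 1) = q + (2 * K + 1) + 1 + 1 by ring,
      sum_Ioc_succ_top (by omega), sum_Ioc_succ_top (by omega), ih,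
      sum_Icc_succ_top (by omega : 1 ≤ K + 1 + 1) (fun i ↦ g (q + 2 * i - 1)),
      sum_Icc_succ_top (by omega : 1 ≤ K + 1) (fun i ↦ g (q + 2 * i)),
      show q + 2 * (K + 1 + 1) - 1 = q + (2 * K + 1) + 1 + 1 by omega,
      show q + 2 * (K + 1) = q + (2 * K + 1) + 1 by omega]
    abel

lemma sum_Icc_sum_Icc_succ (G : ℕ → ℕ → M) (K : ℕ) :
    ∑ a ∈ Icc 1 (K + 1), ∑ b ∈ Icc 1 (K + 1), G a b
      = ∑ a ∈ Icc 1 K, ∑ b ∈ Icc 1 K, G a b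
        + (∑ b ∈ Icc 1 (K + 1), G (K + 1) b + ∑ a ∈ Icc 1 K, G a (K + 1)) := by
  rw [sum_Icc_succ_top (by omega : 1 ≤ K + 1)]
  simp_rw [sum_Icc_succ_top (by omega : 1 ≤ K + 1) (G _)]
  rw [sum_add_distrib]
  abel

/-- The block `((k - 1) ^ 2, k ^ 2]` adds the row `a = k` (odd positions) and the column `b = k`
(even positions) to the grid `[1, k - 1] × [1, k - 1]`. -/
lemma sum_Icc_sq_eq_sum_sum {α β : Type*} {x : ℕ → α} {y : ℕ → β} {u : ℕ → α × β}
    (g : α × β → M)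
    (hodd : ∀ k i : ℕ, 1 ≤ i → i ≤ k → u ((k - 1) ^ 2 + 2 * i - 1) = (x k, y i))
    (heven : ∀ k i : ℕ, 1 ≤ i → i < k → u ((k - 1) ^ 2 + 2 * i) = (x i, y k)) (K : ℕ) :
    ∑ m ∈ Icc 1 (K ^ 2), g (u m) = ∑ a ∈ Icc 1 K, ∑ b ∈ Icc 1 K, g (x a, y b) := by
  induction K with
  | zero => simp
  | succ K ih =>
    have hrow : ∑ i ∈ Icc 1 (K + 1), g (u (K ^ 2 + 2 * i - 1))
        = ∑ b ∈ Icc 1 (K + 1), g (x (K + 1), y b) :=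
      sum_congr rfl fun i hi ↦ by
        rw [mem_Icc] at hi; simpa using congrArg g (hodd (K + 1) i hi.1 hi.2)
    have hcol : ∑ i ∈ Icc 1 K, g (u (K ^ 2 + 2 * i)) = ∑ a ∈ Icc 1 K, g (x a, y (K + 1)) :=
      sum_congr rfl fun i hi ↦ by
        rw [mem_Icc] at hi; simpa using congrArg g (heven (K + 1) i hi.1 (by omega))
    rw [← sum_Icc_one_add_sum_Ioc _ (Nat.pow_le_pow_left K.le_succ 2),
      show (K + 1) ^ 2 = K ^ 2 + (2 * K + 1) by ring, sum_Ioc_eq_sum_odd_add_sum_even, ih, hrow,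
      hcol, sum_Icc_sum_Icc_succ fun a b ↦ g (x a, y b)]

end Sums

lemma abs_sum_le_card_mul {ι : Type*} (s : Finset ι) {g : ι → ℝ} {C : ℝ}
    (hC : ∀ i ∈ s, |g i| ≤ C) : |∑ i ∈ s, g i| ≤ #s * C :=
  (abs_sum_le_sum_abs _ _).trans ((sum_le_card_nsmul _ _ C hC).trans_eq (nsmul_eq_mul _ _))

lemma abs_div_sq_sub_div_le {a r n k C : ℝ} (hk : 0 < k) (hkn : k ^ 2 ≤ n)
    (hnk : n ≤ k ^ 2 + 2 * k) (ha : |a| ≤ k ^ 2 * C) (hr : |r| ≤ 2 * k * C) :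
    |a / k ^ 2 - (a + r) / n| ≤ 4 * C / k := by
  have hn : 0 < n := (by positivity : 0 < k ^ 2).trans_le hkn
  have ha' : |a / k ^ 2| ≤ C := by
    rwa [abs_div, abs_of_pos (pow_pos hk 2), div_le_iff₀ (by positivity), mul_comm]
  have hC : 0 ≤ C := (abs_nonneg _).trans ha'
  calc |a / k ^ 2 - (a + r) / n| = |a / k ^ 2 * ((n - k ^ 2) / n) - r / n| := by
        congr 1; field_simp; ring
    _ ≤ |a / k ^ 2| * ((n - k ^ 2) / n) + |r| / n := by
        grw [abs_sub, abs_mul, abs_div r, abs_of_nonneg (by bound : 0 ≤ (n - k ^ 2) / n),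
          abs_of_pos hn]
    _ ≤ C * (2 * k / n) + 2 * k * C / n := by gcongr; linarith
    _ = 4 * C * k / n := by ring
    _ ≤ 4 * C * k / k ^ 2 := by gcongr
    _ = 4 * C / k := by field_simp

noncomputable def sampleAverage {α : Type*} (w : ℕ → α) (N : ℕ) (h : α → ℝ) : ℝ :=
  (∑ m ∈ Icc 1 N, h (w m)) / N

section SampleAverage

variable {α : Type*} (w : ℕ → α)

lemma dist_sampleAverage_le {N : ℕ} {h h' : α → ℝ} {C : ℝ} (hC : 0 ≤ C)
    (hh : ∀ a, dist (h a) (h' a) ≤ C) :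
    dist (sampleAverage w N h) (sampleAverage w N h') ≤ C := by
  rcases N.eq_zero_or_pos with rfl | hN
  · simpa [sampleAverage]
  rw [sampleAverage, sampleAverage, Real.dist_eq, ← sub_div, ← sum_sub_distrib, abs_div,
    Nat.abs_cast, div_le_iff₀ (by positivity), mul_comm]
  simpa using abs_sum_le_card_mul (Icc 1 N) fun m _ ↦ (Real.dist_eq _ _).symm.trans_le (hh (w m))

lemma dist_sampleAverage_sq_le {h : α → ℝ} {C : ℝ} (hC : ∀ m, |h (w m)| ≤ C) {K N : ℕ}
    (hK : 0 < K) (hKN : K ^ 2 ≤ N) (hNK : N < (K + 1) ^ 2) :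
    dist (sampleAverage w (K ^ 2) h) (sampleAverage w N h) ≤ 4 * C / K := by
  rw [Real.dist_eq, sampleAverage, sampleAverage, ← sum_Icc_one_add_sum_Ioc _ hKN]
  push_cast
  refine abs_div_sq_sub_div_le (by positivity) (by exact_mod_cast hKN)
    (by norm_cast; linarith) ?_ ?_
  · exact_mod_cast (abs_sum_le_card_mul _ fun m _ ↦ hC m).trans_eq
      (by rw [Nat.card_Icc, Nat.add_sub_cancel])
  · refine (abs_sum_le_card_mul _ fun m _ ↦ hC m).trans (mul_le_mul_of_nonneg_right ?_ ?_)
    · have : (K + 1) ^ 2 = K ^ 2 + 2 * K + 1 := by ring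
      rw [Nat.card_Ioc]
      exact_mod_cast (by omega : N - K ^ 2 ≤ 2 * K)
    · exact (abs_nonneg _).trans (hC 0)

lemma tendsto_sampleAverage_of_tendsto_sq {h : α → ℝ} {C L : ℝ} (hC : ∀ m, |h (w m)| ≤ C)
    (hsq : Tendsto (fun K ↦ sampleAverage w (K ^ 2) h) atTop (𝓝 L)) :
    Tendsto (fun N ↦ sampleAverage w N h) atTop (𝓝 L) := by
  have hsqrt : Tendsto Nat.sqrt atTop atTop := tendsto_atTop_atTop.2 fun b ↦
    ⟨b ^ 2, fun n hn ↦ (Nat.sqrt_eq' b).symm.le.trans (Nat.sqrt_le_sqrt hn)⟩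
  refine (hsq.comp hsqrt).congr_dist (squeeze_zero' (.of_forall fun _ ↦ dist_nonneg) ?_
    ((tendsto_const_div_atTop_nhds_zero_nat (4 * C)).comp hsqrt))
  filter_upwards [eventually_gt_atTop 0] with N hN
  exact dist_sampleAverage_sq_le w hC (Nat.sqrt_pos.2 hN) (Nat.sqrt_le' N) (Nat.lt_succ_sqrt' N)

lemma tendsto_sampleAverage_of_tendstoUniformly {g : ℕ → α → ℝ} {F : α → ℝ} {L : ℝ}
    (hg : TendstoUniformly g F atTop) (hF : Tendsto (fun N ↦ sampleAverage w N F) atTop (𝓝 L)) :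
    Tendsto (fun N ↦ sampleAverage w N (g N)) atTop (𝓝 L) := by
  refine hF.congr_dist (Metric.tendsto_nhds.2 fun ε hε ↦ ?_)
  filter_upwards [Metric.tendstoUniformly_iff.1 hg (ε / 2) (half_pos hε)] with N hN
  rw [Real.dist_0_eq_abs, abs_dist]
  exact (dist_sampleAverage_le w (half_pos hε).le fun a ↦ (hN a).le).trans_lt (half_lt_self hε)

end SampleAverage

theorem tendstoUniformly_sampleAverage_curry {X Y : Type*} [TopologicalSpace X] [CompactSpace X]
    [TopologicalSpace Y] [CompactSpace Y] [MeasurableSpace Y] {ρY : Measure Y} {y : ℕ → Y}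
    (hy : IsUniformlyDistributed ρY y) (f : C(X × Y, ℝ)) :
    TendstoUniformly (fun K a ↦ sampleAverage y K fun b ↦ f (a, b))
      (fun a ↦ ∫ b, f (a, b) ∂ρY) atTop := by
  have hΛ : Equicontinuous fun K (h : C(Y, ℝ)) ↦ sampleAverage y K h :=
    (LipschitzWith.uniformEquicontinuous _ 1 fun K ↦ LipschitzWith.of_dist_le_mul fun h h' ↦ by
      simpa using dist_sampleAverage_le y dist_nonneg fun b ↦ h.dist_apply_le_dist b).equicontinuous
  have hequi : Equicontinuous fun K a ↦ sampleAverage y K (f.curry a) :=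
    equicontinuous_iff_continuous.2 (equicontinuous_iff_continuous.1 hΛ |>.comp f.curry.continuous)
  exact UniformFun.tendsto_iff_tendstoUniformly.1 <|
    (hequi.tendsto_uniformFun_iff_pi _ _).2 (tendsto_pi_nhds.2 fun a ↦ hy (f.curry a))

theorem tendsto_sum_sum_div_sq {X Y : Type*} [TopologicalSpace X] [CompactSpace X]
    [MeasurableSpace X] [OpensMeasurableSpace X] [TopologicalSpace Y] [CompactSpace Y]
    [MeasurableSpace Y] [OpensMeasurableSpace Y] [SecondCountableTopologyEither X Y]
    {ρX : Measure X} [IsFiniteMeasure ρX] {ρY : Measure Y} [IsFiniteMeasure ρY]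
    {x : ℕ → X} {y : ℕ → Y} (hx : IsUniformlyDistributed ρX x) (hy : IsUniformlyDistributed ρY y)
    (f : C(X × Y, ℝ)) :
    Tendsto (fun K : ℕ ↦ (∑ a ∈ Icc 1 K, ∑ b ∈ Icc 1 K, f (x a, y b)) / (K : ℝ) ^ 2) atTop
      (𝓝 (∫ p, f p ∂ρX.prod ρY)) := by
  have hunif := tendstoUniformly_sampleAverage_curry hy f
  have hF : Continuous fun a ↦ ∫ b, f (a, b) ∂ρY :=
    hunif.continuous (.of_forall fun K ↦ by unfold sampleAverage; fun_prop)
  have hfx : Tendsto (fun K ↦ sampleAverage x K fun a ↦ ∫ b, f (a, b) ∂ρY) atTop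
      (𝓝 (∫ p, f p ∂ρX.prod ρY)) := by
    rw [integral_prod _ (f.continuous.integrable_of_hasCompactSupport (.of_compactSpace _))]
    exact hx ⟨_, hF⟩
  convert tendsto_sampleAverage_of_tendstoUniformly x hunif hfx using 2 with K
  simp only [sampleAverage, sum_div, div_div, sq]

theorem ud_convolution_general
    {X Y : Type*} [TopologicalSpace X] [CompactSpace X] [TopologicalSpace.MetrizableSpace X]
    [MeasurableSpace X] [BorelSpace X]
    [TopologicalSpace Y] [CompactSpace Y]
    [MeasurableSpace Y] [BorelSpace Y]
    (ρX : Measure X) [IsProbabilityMeasure ρX]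
    (ρY : Measure Y) [IsProbabilityMeasure ρY]
    (x : ℕ → X) (y : ℕ → Y)
    (hx : IsUniformlyDistributed ρX x) (hy : IsUniformlyDistributed ρY y)
    (u : ℕ → X × Y)
    (hodd : ∀ k i : ℕ, 1 ≤ i → i ≤ k → u ((k - 1) ^ 2 + 2 * i - 1) = (x k, y i))
    (heven : ∀ k i : ℕ, 1 ≤ i → i < k → u ((k - 1) ^ 2 + 2 * i) = (x i, y k)) :
    IsUniformlyDistributed (ρX.prod ρY) u := by
  intro f
  refine tendsto_sampleAverage_of_tendsto_sq u (C := ‖f‖)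
    (fun m ↦ by simpa using f.norm_coe_le_norm (u m)) ?_
  simpa only [sampleAverage, sum_Icc_sq_eq_sum_sum f hodd heven, Nat.cast_pow]
    using tendsto_sum_sum_div_sq hx hy f

theorem ud_convolution
    {X Y : Type*} [TopologicalSpace X] [CompactSpace X] [TopologicalSpace.MetrizableSpace X]
    [MeasurableSpace X] [BorelSpace X]
    [TopologicalSpace Y] [CompactSpace Y] [TopologicalSpace.MetrizableSpace Y]
    [MeasurableSpace Y] [BorelSpace Y]
    (ρX : Measure X) [IsProbabilityMeasure ρX]
    (ρY : Measure Y) [IsProbabilityMeasure ρY]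
    (x : ℕ → X) (y : ℕ → Y)
    (hx : IsUniformlyDistributed ρX x) (hy : IsUniformlyDistributed ρY y)
    (u : ℕ → X × Y)
    (hodd : ∀ k i : ℕ, 1 ≤ i → i ≤ k → u ((k - 1) ^ 2 + 2 * i - 1) = (x k, y i))
    (heven : ∀ k i : ℕ, 1 ≤ i → i < k → u ((k - 1) ^ 2 + 2 * i) = (x i, y k)) :
    IsUniformlyDistributed (ρX.prod ρY) u :=
  ud_convolution_general ρX ρY x y hx hy u hodd heven
end

section
/- Let G be a compact topological group with Haar probability measure \mu, H a closed subgroup, X = G/H, \pi the quotient map, \phi a measurable section of \pi, and T(g) = (\pi(g), (\phi\pi(g))^{-1}g). Then the pushforward T_*\mu equals the product measure \rho_X \times \rho_H, where \rho_X is the G-invariant probability measure on X and \rho_H is the normalized Haar measure on H. -/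
/-! With `f g = (φ (π g))⁻¹ * g`, the map `T` is `g ↦ (π g, f g)`. For measurable `s ⊆ G ⧸ H`,
the measure `B ↦ μ (π⁻¹ s ∩ f⁻¹ B)` on `H` is right-invariant: `π⁻¹ s` is stable under right
translation by `H`, `μ` is right-invariant (compact groups are unimodular) and `f (g * k) = f g * k`.
A finite right-invariant measure on the compact group `H` is a multiple of its Haar measure, and
comparing total masses gives `μ (π⁻¹ s ∩ f⁻¹ t) = μ (π⁻¹ s) * ρH t`: `T_* μ` and `ρX × ρH` agree
on rectangles. -/

open MeasureTheory Measure Set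

namespace MeasureTheory.Measure

section CompactGroup

variable {K : Type*} [Group K] [TopologicalSpace K] [IsTopologicalGroup K] [CompactSpace K]
  [MeasurableSpace K] [BorelSpace K] (ρ : Measure K) [ρ.IsHaarMeasure] [IsProbabilityMeasure ρ]

theorem eq_measure_univ_smul_of_isMulLeftInvariant (ν : Measure K) [ν.IsMulLeftInvariant]
    [IsFiniteMeasure ν] : ν = ν univ • ρ := by
  have hν := isMulInvariant_eq_smul_of_compactSpace ν ρ
  have huniv : ν univ = haarScalarFactor ν ρ := by
    conv_lhs => rw [hν]
    simp
  rwa [huniv, ← ENNReal.smul_def]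

instance (priority := 100) isMulRightInvariant_of_isProbabilityMeasure : ρ.IsMulRightInvariant :=
  ⟨fun k => by
    have : IsProbabilityMeasure (ρ.map (· * k)) :=
      isProbabilityMeasure_map (measurable_mul_const k).aemeasurable
    simpa using eq_measure_univ_smul_of_isMulLeftInvariant ρ (ρ.map (· * k))⟩

theorem eq_measure_univ_smul_of_isMulRightInvariant (ν : Measure K) [ν.IsMulRightInvariant]
    [IsFiniteMeasure ν] : ν = ν univ • ρ := by
  have : IsFiniteMeasure ν.inv := isFiniteMeasure_map ν _
  have : IsProbabilityMeasure ρ.inv := isProbabilityMeasure_map measurable_inv.aemeasurable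
  have hρ : ρ.inv = ρ := by simpa using eq_measure_univ_smul_of_isMulLeftInvariant ρ ρ.inv
  have hν : ν.inv = ν univ • ρ := by
    simpa [inv_apply] using eq_measure_univ_smul_of_isMulLeftInvariant ρ ν.inv
  calc ν = ν.inv.inv := (Measure.inv_inv ν).symm
    _ = ν univ • ρ := by rw [hν, inv_def, Measure.map_smul, ← inv_def, hρ]

end CompactGroup

theorem isMulRightInvariant_map_restrict {G : Type*} [Group G] [MeasurableSpace G]
    [MeasurableMul G] {H : Subgroup G} [MeasurableMul H] (μ : Measure G) [μ.IsMulRightInvariant]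
    {A : Set G} (hA : MeasurableSet A) (hA_mul : ∀ k : H, (· * (k : G)) ⁻¹' A = A)
    {f : G → H} (hf : Measurable f) (hf_mul : ∀ g (k : H), f (g * k) = f g * k) :
    ((μ.restrict A).map f).IsMulRightInvariant := by
  refine ⟨fun k => ?_⟩
  have hcomm : (· * k) ∘ f = f ∘ (· * (k : G)) := funext fun g => (hf_mul g k).symm
  have hrestrict : (μ.restrict A).map (· * (k : G)) = μ.restrict A := by
    conv_lhs => rw [← hA_mul k]
    rw [← restrict_map (measurable_mul_const _) hA, map_mul_right_eq_self]
  rw [map_map (measurable_mul_const k) hf, hcomm,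
    ← map_map hf (measurable_mul_const (k : G)), hrestrict]

theorem map_restrict_eq_smul_of_equivariant {G : Type*} [Group G] [TopologicalSpace G]
    [IsTopologicalGroup G] [MeasurableSpace G] [BorelSpace G] {H : Subgroup G} [CompactSpace H]
    (μ : Measure G) [μ.IsMulRightInvariant] [IsFiniteMeasure μ]
    (ρH : Measure H) [ρH.IsHaarMeasure] [IsProbabilityMeasure ρH]
    {A : Set G} (hA : MeasurableSet A) (hA_mul : ∀ k : H, (· * (k : G)) ⁻¹' A = A)
    {f : G → H} (hf : Measurable f) (hf_mul : ∀ g (k : H), f (g * k) = f g * k) :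
    (μ.restrict A).map f = μ A • ρH := by
  have := isMulRightInvariant_map_restrict μ hA hA_mul hf hf_mul
  have : IsFiniteMeasure ((μ.restrict A).map f) := isFiniteMeasure_map _ _
  rw [eq_measure_univ_smul_of_isMulRightInvariant ρH ((μ.restrict A).map f),
    map_apply hf .univ, preimage_univ, restrict_apply_univ]

end MeasureTheory.Measure

namespace QuotientGroup

variable {G : Type*} [Group G] {H : Subgroup G}

variable (φ : G ⧸ H → G) (hφ : ∀ x : G ⧸ H, mk (φ x) = x)

def fiberCoord (g : G) : H :=
  ⟨(φ (mk g))⁻¹ * g, QuotientGroup.eq.mp (hφ (mk g))⟩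

theorem preimage_mk_mul_right (s : Set (G ⧸ H)) (k : H) :
    (· * (k : G)) ⁻¹' ((mk : G → G ⧸ H) ⁻¹' s) = mk ⁻¹' s := by
  ext g
  simp [mk_mul_of_mem g k.2]

theorem fiberCoord_mul (g : G) (k : H) : fiberCoord φ hφ (g * k) = fiberCoord φ hφ g * k :=
  Subtype.ext <| by simp [fiberCoord, mk_mul_of_mem g k.2, mul_assoc]

theorem measurable_fiberCoord [MeasurableSpace G] [MeasurableMul₂ G] [MeasurableInv G]
    [MeasurableSpace (G ⧸ H)] (hmk : Measurable (mk : G → G ⧸ H))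
    (hφm : Measurable φ) : Measurable (fiberCoord φ hφ) :=
  ((hφm.comp hmk).inv.mul measurable_id).subtype_mk

end QuotientGroup

theorem subgroup_decomposition_pushforward
    {G : Type*} [Group G] [TopologicalSpace G] [IsTopologicalGroup G] [CompactSpace G]
    [TopologicalSpace.MetrizableSpace G] [MeasurableSpace G] [BorelSpace G]
    (μ : Measure G) [μ.IsHaarMeasure] [IsProbabilityMeasure μ]
    (H : Subgroup G) (hHcl : IsClosed (H : Set G))
    [MeasurableSpace (G ⧸ H)] [BorelSpace (G ⧸ H)]
    (ρH : Measure H) [ρH.IsHaarMeasure] [IsProbabilityMeasure ρH]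
    (φ : G ⧸ H → G) (hφmeas : Measurable φ)
    (hφ : ∀ x : G ⧸ H, (QuotientGroup.mk (φ x) : G ⧸ H) = x) :
    μ.map
        (fun g : G =>
          ((QuotientGroup.mk g : G ⧸ H),
            (⟨(φ (QuotientGroup.mk g))⁻¹ * g,
              QuotientGroup.eq.mp (hφ (QuotientGroup.mk g))⟩ : H)))
      = (μ.map (QuotientGroup.mk : G → G ⧸ H)).prod ρH := by
  have : CompactSpace H := isCompact_iff_compactSpace.mp hHcl.isCompact
  have hmk : Measurable (QuotientGroup.mk : G → G ⧸ H) := continuous_quotient_mk'.measurable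
  have hf := QuotientGroup.measurable_fiberCoord φ hφ hmk hφmeas
  change μ.map (fun g : G => ((g : G ⧸ H), QuotientGroup.fiberCoord φ hφ g)) = _
  refine (Measure.prod_eq fun s t hs ht => ?_).symm
  have hfiber := map_restrict_eq_smul_of_equivariant μ ρH (hmk hs)
    (QuotientGroup.preimage_mk_mul_right s) hf (QuotientGroup.fiberCoord_mul φ hφ)
  calc μ.map (fun g : G => ((g : G ⧸ H), QuotientGroup.fiberCoord φ hφ g)) (s ×ˢ t)
      = (μ.restrict (QuotientGroup.mk ⁻¹' s)).map (QuotientGroup.fiberCoord φ hφ) t := by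
        rw [map_apply hf ht, restrict_apply (hf ht), map_apply (hmk.prodMk hf) (hs.prod ht),
          mk_preimage_prod, inter_comm]
    _ = μ.map QuotientGroup.mk s * ρH t := by
        rw [hfiber, map_apply hmk hs, Measure.smul_apply, smul_eq_mul]
end
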